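/- In the cost model where accessing the item at position i costs i and each adjacent transposition costs 1, the optimal offline cost of serving a request sequence σ from initial list ρ0 is the same whether list reorganizations are charged by the total number of adjacent transpositions used or only by the number of paid transpositions (transpositions not moving the just-accessed item forward). -/

import Mathlib

/-!
Charging the free transpositions can only increase the cost of a strategy, so the full optimum
is at least the paid one. Conversely, if a strategy moves the accessed item `t` positions forward
by free transpositions right after the access, perform those `t` transpositions as paid ones just
before the access instead. The configurations stay the same, the access becomes exactly `t`
cheaper, and this pays for the `t` transpositions now charged: the full cost of the new strategy
equals the paid cost of the old one.
-/

open Finset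

variable {α : Type*} [DecidableEq α] [Inhabited α]

/-- Swap the items at adjacent positions `i` and `i+1` (0-indexed). -/
def swapAdj (i : ℕ) (L : List α) : List α :=
  if i + 1 < L.length then
    (L.set i (L.getD (i+1) default)).set (i+1) (L.getD i default)
  else L

/-- Apply a sequence of adjacent transpositions (given by their positions). -/
def applySwaps (ops : List ℕ) (L : List α) : List α :=
  ops.foldl (fun M i => swapAdj i M) L

/-- Element transfer: move the item at position `k` to position `j` (0-indexed),
leaving the relative order of all other items unchanged. -/
def elemTransfer (k j : ℕ) (L : List α) : List α :=
  (L.eraseIdx k).insertIdx j (L.getD k default)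

/-- Subset transfer: move the items of `S` (a subset of the items preceding `a`)
to immediately after `a`, preserving relative orders. -/
def subsetTransfer (a : α) (S : Finset α) (L : List α) : List α :=
  ((L.take (L.idxOf a)).filter (fun x => x ∉ S)) ++ [a]
    ++ ((L.take (L.idxOf a)).filter (fun x => x ∈ S)) ++ L.drop (L.idxOf a + 1)

/-- Number of inversions between two orderings of the same items: the number of
(unordered) pairs whose relative order differs. -/
def invCount (L M : List α) : ℕ :=
  ((L.toFinset ×ˢ L.toFinset).filter
    (fun p => L.idxOf p.1 < L.idxOf p.2 ∧ M.idxOf p.2 < M.idxOf p.1)).card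

/-- Configurations of an offline strategy: before serving request `i` the list is
`conf ρ0 σ ops free i`; to serve request `i` the strategy first applies the (paid)
adjacent transpositions `ops i`, then accesses `σ i`, and finally moves the just-accessed
item `σ i` forward by (up to) `free i` positions using free transpositions. -/
def conf (ρ0 : List α) (σ : ℕ → α) (ops : ℕ → List ℕ) (free : ℕ → ℕ) : ℕ → List α
  | 0 => ρ0
  | i + 1 =>
      let M := applySwaps (ops i) (conf ρ0 σ ops free i)
      elemTransfer (M.idxOf (σ i)) (M.idxOf (σ i) - free i) M

/-- The access cost of request `i`: the position (1-indexed) of `σ i` at access time. -/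
def accessCost (ρ0 : List α) (σ : ℕ → α) (ops : ℕ → List ℕ) (free : ℕ → ℕ) (i : ℕ) : ℕ :=
  (applySwaps (ops i) (conf ρ0 σ ops free i)).idxOf (σ i) + 1

/-- The number of free transpositions actually used at step `i`. -/
def freeUsed (ρ0 : List α) (σ : ℕ → α) (ops : ℕ → List ℕ) (free : ℕ → ℕ) (i : ℕ) : ℕ :=
  min (free i) ((applySwaps (ops i) (conf ρ0 σ ops free i)).idxOf (σ i))

/-- Total cost when every transposition (free or paid) is charged. -/
def costFull (ρ0 : List α) (σ : ℕ → α) (m : ℕ) (ops : ℕ → List ℕ) (free : ℕ → ℕ) : ℕ :=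
  ∑ i ∈ Finset.range m,
    ((ops i).length + freeUsed ρ0 σ ops free i + accessCost ρ0 σ ops free i)

/-- Total cost when only paid transpositions are charged (free transpositions,
which move the just-accessed item forward immediately after its access, are free). -/
def costPaid (ρ0 : List α) (σ : ℕ → α) (m : ℕ) (ops : ℕ → List ℕ) (free : ℕ → ℕ) : ℕ :=
  ∑ i ∈ Finset.range m, ((ops i).length + accessCost ρ0 σ ops free i)

theorem List.insertIdx_eq_take_append_drop {β : Type*} (x : β) :
    ∀ (l : List β) (n : ℕ), n ≤ l.length → l.insertIdx n x = l.take n ++ x :: l.drop n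
  | _, 0, _ => rfl
  | [], _ + 1, h => by simp at h
  | a :: l, n + 1, h => by
    simp [List.insertIdx_succ_cons, insertIdx_eq_take_append_drop x l n (by simpa using h)]

section Transfers

variable {β : Type*} [Inhabited β]

theorem elemTransfer_eq_insertIdx {k : ℕ} (j : ℕ) {L : List β} (hk : k < L.length) :
    elemTransfer k j L = (L.eraseIdx k).insertIdx j L[k] := by
  rw [elemTransfer, List.getD_eq_getElem _ _ hk]

theorem length_elemTransfer {k j : ℕ} {L : List β} (hk : k < L.length) (hj : j < L.length) :
    (elemTransfer k j L).length = L.length := by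
  have hj' : j ≤ (L.eraseIdx k).length := by rw [List.length_eraseIdx_of_lt hk]; omega
  rw [elemTransfer, List.length_insertIdx_of_le_length hj', List.length_eraseIdx_of_lt hk]
  omega

theorem elemTransfer_perm {k j : ℕ} {L : List β} (hk : k < L.length) (hj : j < L.length) :
    (elemTransfer k j L).Perm L := by
  have hj' : j ≤ (L.eraseIdx k).length := by rw [List.length_eraseIdx_of_lt hk]; omega
  have hk' : k ≤ (L.eraseIdx k).length := by rw [List.length_eraseIdx_of_lt hk]; omega
  have hL : (L[k] :: L.eraseIdx k).Perm L := by
    simpa only [List.insertIdx_eraseIdx_getElem hk] using (List.perm_insertIdx L[k] _ hk').symm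
  rw [elemTransfer_eq_insertIdx j hk]
  exact (List.perm_insertIdx _ _ hj').trans hL

theorem elemTransfer_self {k : ℕ} {L : List β} (hk : k < L.length) : elemTransfer k k L = L := by
  rw [elemTransfer_eq_insertIdx k hk, List.insertIdx_eraseIdx_getElem hk]

theorem elemTransfer_elemTransfer {k j j' : ℕ} {L : List β} (hj' : j' ≤ k) (hk : k < L.length) :
    elemTransfer j' j (elemTransfer k j' L) = elemTransfer k j L := by
  have hj'' : j' ≤ (L.eraseIdx k).length := by rw [List.length_eraseIdx_of_lt hk]; omega
  have hlen : ((L.eraseIdx k).insertIdx j' L[k]).length = L.length := by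
    rw [List.length_insertIdx_of_le_length hj'', List.length_eraseIdx_of_lt hk]; omega
  rw [elemTransfer_eq_insertIdx j' hk, elemTransfer_eq_insertIdx j (by rw [hlen]; omega),
    elemTransfer_eq_insertIdx j hk, List.eraseIdx_insertIdx_self, List.getElem_insertIdx_self]

theorem swapAdj_eq_elemTransfer {j : ℕ} {L : List β} (h : j + 1 < L.length) :
    swapAdj j L = elemTransfer (j + 1) j L := by
  have hlen : (L.eraseIdx (j + 1)).length = L.length - 1 := List.length_eraseIdx_of_lt h
  apply List.ext_getElem
  · simp only [swapAdj, h, if_true, List.length_set, elemTransfer, List.length_insertIdx, hlen]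
    split_ifs <;> omega
  · intro i h1 h2
    simp only [swapAdj, h, if_true, List.getElem_set, elemTransfer, List.getElem_insertIdx,
      List.getElem_eraseIdx, List.getD_eq_getElem?_getD, List.getElem?_eq_getElem h]
    split_ifs <;> grind

theorem swapAdj_perm (j : ℕ) (L : List β) : (swapAdj j L).Perm L := by
  by_cases h : j + 1 < L.length
  · rw [swapAdj_eq_elemTransfer h]; exact elemTransfer_perm h (by omega)
  · rw [swapAdj, if_neg h]

theorem applySwaps_append (ops ops' : List ℕ) (L : List β) :
    applySwaps (ops ++ ops') L = applySwaps ops' (applySwaps ops L) :=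
  List.foldl_append

theorem applySwaps_perm (ops : List ℕ) (L : List β) : (applySwaps ops L).Perm L := by
  induction ops generalizing L with
  | nil => rfl
  | cons j ops ih => exact (ih (swapAdj j L)).trans (swapAdj_perm j L)

def forwardSwaps (p t : ℕ) : List ℕ := (List.range t).map (p - 1 - ·)

@[simp] theorem length_forwardSwaps (p t : ℕ) : (forwardSwaps p t).length = t := by
  simp [forwardSwaps]

theorem applySwaps_forwardSwaps {p t : ℕ} {L : List β} (hp : p < L.length) (ht : t ≤ p) :
    applySwaps (forwardSwaps p t) L = elemTransfer p (p - t) L := by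
  induction t with
  | zero => simp [forwardSwaps, applySwaps, elemTransfer_self hp]
  | succ t ih =>
    have hswap : p - 1 - t + 1 < (elemTransfer p (p - t) L).length := by
      rw [length_elemTransfer hp (by omega)]; omega
    rw [forwardSwaps, List.range_succ, List.map_append, ← forwardSwaps, applySwaps_append,
      ih (by omega)]
    change swapAdj (p - 1 - t) (elemTransfer p (p - t) L) = _
    rw [swapAdj_eq_elemTransfer hswap, show p - 1 - t + 1 = p - t by omega,
      elemTransfer_elemTransfer (by omega) hp, show p - 1 - t = p - (t + 1) by omega]

end Transfers

theorem idxOf_elemTransfer_idxOf {M : List α} {x : α} {j : ℕ} (hx : x ∈ M)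
    (hj : j ≤ M.idxOf x) : (elemTransfer (M.idxOf x) j M).idxOf x = j := by
  have hk : M.idxOf x < M.length := List.idxOf_lt_length_iff.2 hx
  have hjk : j ≤ (M.eraseIdx (M.idxOf x)).length := by
    rw [List.length_eraseIdx_of_lt hk]; omega
  have hx_take : x ∉ M.take j := by rw [List.mem_take_iff_idxOf_lt hx]; omega
  rw [elemTransfer_eq_insertIdx j hk, List.getElem_idxOf hk,
    List.insertIdx_eq_take_append_drop _ _ _ hjk, List.take_eraseIdx_eq_take_of_le _ _ _ hj,
    List.idxOf_append_of_notMem hx_take, List.idxOf_cons_self, List.length_take_of_le (by omega),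
    Nat.add_zero]

section Strategies

variable {ρ0 : List α} {σ : ℕ → α} (ops : ℕ → List ℕ) (free : ℕ → ℕ)

variable (ρ0 σ) in
def accessList (i : ℕ) : List α := applySwaps (ops i) (conf ρ0 σ ops free i)

theorem conf_succ (i : ℕ) :
    conf ρ0 σ ops free (i + 1) = elemTransfer ((accessList ρ0 σ ops free i).idxOf (σ i))
      ((accessList ρ0 σ ops free i).idxOf (σ i) - free i) (accessList ρ0 σ ops free i) :=
  rfl

theorem accessCost_eq (i : ℕ) :
    accessCost ρ0 σ ops free i = (accessList ρ0 σ ops free i).idxOf (σ i) + 1 :=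
  rfl

theorem freeUsed_eq (i : ℕ) :
    freeUsed ρ0 σ ops free i = min (free i) ((accessList ρ0 σ ops free i).idxOf (σ i)) :=
  rfl

variable (ρ0 σ) in
def freeAsPaid (i : ℕ) : List ℕ :=
  ops i ++ forwardSwaps ((accessList ρ0 σ ops free i).idxOf (σ i)) (freeUsed ρ0 σ ops free i)

theorem accessList_perm (hσ : ∀ i, σ i ∈ ρ0) (i : ℕ) : (accessList ρ0 σ ops free i).Perm ρ0 := by
  induction i with
  | zero => exact applySwaps_perm _ _
  | succ i ih =>
    have hk := List.idxOf_lt_length_iff.2 (ih.mem_iff.2 (hσ i))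
    rw [accessList, conf_succ]
    exact (applySwaps_perm _ _).trans ((elemTransfer_perm hk (by omega)).trans ih)

theorem idxOf_lt_length_accessList (hσ : ∀ i, σ i ∈ ρ0) (i : ℕ) :
    (accessList ρ0 σ ops free i).idxOf (σ i) < (accessList ρ0 σ ops free i).length :=
  List.idxOf_lt_length_iff.2 ((accessList_perm ops free hσ i).mem_iff.2 (hσ i))

theorem conf_succ_of_free_eq_zero (hσ : ∀ i, σ i ∈ ρ0) (i : ℕ) :
    conf ρ0 σ ops (fun _ => 0) (i + 1) = accessList ρ0 σ ops (fun _ => 0) i :=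
  elemTransfer_self (idxOf_lt_length_accessList ops _ hσ i)

theorem applySwaps_forwardSwaps_accessList (hσ : ∀ i, σ i ∈ ρ0) (i : ℕ) :
    applySwaps (forwardSwaps ((accessList ρ0 σ ops free i).idxOf (σ i))
      (freeUsed ρ0 σ ops free i)) (accessList ρ0 σ ops free i) = conf ρ0 σ ops free (i + 1) := by
  rw [freeUsed_eq, applySwaps_forwardSwaps (idxOf_lt_length_accessList ops free hσ i)
    (min_le_right _ _), conf_succ]
  congr 1
  omega

theorem conf_freeAsPaid (hσ : ∀ i, σ i ∈ ρ0) (i : ℕ) :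
    conf ρ0 σ (freeAsPaid ρ0 σ ops free) (fun _ => 0) i = conf ρ0 σ ops free i := by
  induction i with
  | zero => rfl
  | succ i ih =>
    rw [conf_succ_of_free_eq_zero _ hσ, accessList, freeAsPaid, applySwaps_append, ih,
      ← accessList, applySwaps_forwardSwaps_accessList _ _ hσ]

theorem accessCost_freeAsPaid (hσ : ∀ i, σ i ∈ ρ0) (i : ℕ) :
    accessCost ρ0 σ (freeAsPaid ρ0 σ ops free) (fun _ => 0) i
      = accessCost ρ0 σ ops free i - freeUsed ρ0 σ ops free i := by
  rw [accessCost_eq, ← conf_succ_of_free_eq_zero _ hσ, conf_freeAsPaid _ _ hσ, conf_succ,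
    idxOf_elemTransfer_idxOf ((accessList_perm ops free hσ i).mem_iff.2 (hσ i)) (Nat.sub_le _ _),
    accessCost_eq, freeUsed_eq]
  omega

theorem costFull_freeAsPaid (m : ℕ) (hσ : ∀ i, σ i ∈ ρ0) :
    costFull ρ0 σ m (freeAsPaid ρ0 σ ops free) (fun _ => 0) = costPaid ρ0 σ m ops free := by
  refine Finset.sum_congr rfl fun i _ => ?_
  have hfree : freeUsed ρ0 σ (freeAsPaid ρ0 σ ops free) (fun _ => 0) i = 0 := Nat.zero_min _
  have hused : freeUsed ρ0 σ ops free i < accessCost ρ0 σ ops free i :=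
    Nat.lt_succ_of_le (min_le_right _ _)
  rw [accessCost_freeAsPaid _ _ hσ, hfree, freeAsPaid, List.length_append, length_forwardSwaps]
  omega

end Strategies

theorem costPaid_le_costFull (ρ0 : List α) (σ : ℕ → α) (m : ℕ) (ops : ℕ → List ℕ)
    (free : ℕ → ℕ) : costPaid ρ0 σ m ops free ≤ costFull ρ0 σ m ops free :=
  Finset.sum_le_sum fun _ _ => by omega

theorem optimal_full_eq_optimal_paid_general (ρ0 : List α) (σ : ℕ → α) (m : ℕ)
    (hσ : ∀ i, σ i ∈ ρ0) :
    sInf {c : ℕ | ∃ ops free, c = costFull ρ0 σ m ops free}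
      = sInf {c : ℕ | ∃ ops free, c = costPaid ρ0 σ m ops free} := by
  refine csInf_eq_csInf_of_forall_exists_le ?_ ?_
  · rintro _ ⟨ops, free, rfl⟩
    exact ⟨_, ⟨ops, free, rfl⟩, costPaid_le_costFull ρ0 σ m ops free⟩
  · rintro _ ⟨ops, free, rfl⟩
    exact ⟨_, ⟨freeAsPaid ρ0 σ ops free, fun _ => 0, rfl⟩,
      (costFull_freeAsPaid ops free m hσ).le⟩

/-- The optimal offline cost of serving a request sequence `σ` of length
`m` from the initial list `ρ0` is the same whether list reorganizations are charged by the
total number of adjacent transpositions used or only by the number of paid transpositions. -/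
theorem optimal_full_eq_optimal_paid (ρ0 : List α) (σ : ℕ → α) (m : ℕ)
    (hnd : ρ0.Nodup) (hσ : ∀ i, σ i ∈ ρ0) :
    sInf {c : ℕ | ∃ ops free, c = costFull ρ0 σ m ops free}
      = sInf {c : ℕ | ∃ ops free, c = costPaid ρ0 σ m ops free} :=
  optimal_full_eq_optimal_paid_general ρ0 σ m hσ
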